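/- arXiv:0806.4684 — 3 statements merged into one kernel-verified Lean document; each statement's English description precedes it below -/
import Mathlib

section
/- For any fixed μ > 0, lim_{k→∞} (ln u_c(k)) / (-k) = 0, where u_c(k) = ∫₀¹ t^{k-1} e^{-μ/(1-t)} dt. In other words, u_c(k) decays subexponentially in k. -/
/-!
The weight `exp (-μ / (1 - t))` is at most `1` and decreasing on `[0, 1)`, so for `0 ≤ a ≤ b < 1`
the moments `uₙ = ∫₀¹ tⁿ exp (-μ / (1 - t)) dt` satisfy `(b - a) exp (-μ / (1 - b)) aⁿ ≤ uₙ ≤ 1`.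
Choosing `a = exp (-c / 2)` gives `exp (-c n) ≤ uₙ` eventually, for every `c > 0`; together with
`uₙ ≤ 1` this squeezes `log uₙ / n` to `0`.
-/

open Filter Topology MeasureTheory intervalIntegral Real

theorem tendsto_log_div_natCast_of_exp_neg_mul_le {x : ℕ → ℝ} (h_le : ∀ᶠ k in atTop, x k ≤ 1)
    (h_ge : ∀ c > 0, ∀ᶠ k : ℕ in atTop, exp (-(c * k)) ≤ x k) :
    Tendsto (fun k : ℕ => log (x k) / k) atTop (𝓝 0) := by
  refine tendsto_order.2 ⟨fun a ha => ?_, fun a ha => ?_⟩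
  · filter_upwards [h_ge (-a / 2) (by linarith), eventually_gt_atTop 0] with k hk hk_pos
    have hk0 : (0 : ℝ) < k := by exact_mod_cast hk_pos
    have hlog : -(-a / 2 * k) ≤ log (x k) := by simpa using log_le_log (exp_pos _) hk
    rw [lt_div_iff₀ hk0]
    nlinarith
  · filter_upwards [h_le, h_ge 1 one_pos] with k hk hk'
    have hx : 0 < x k := (exp_pos _).trans_le hk'
    exact (div_nonpos_of_nonpos_of_nonneg (log_nonpos hx.le hk) k.cast_nonneg).trans_lt ha

section Moments

variable {μ : ℝ}

theorem exp_neg_div_one_sub_le_one (hμ : 0 ≤ μ) {t : ℝ} (ht : t ≤ 1) :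
    exp (-μ / (1 - t)) ≤ 1 :=
  exp_le_one_iff.2 (div_nonpos_of_nonpos_of_nonneg (neg_nonpos.2 hμ) (sub_nonneg.2 ht))

theorem exp_neg_div_one_sub_le_of_le (hμ : 0 ≤ μ) {s t : ℝ} (hst : s ≤ t) (ht : t < 1) :
    exp (-μ / (1 - t)) ≤ exp (-μ / (1 - s)) :=
  exp_le_exp.2 <| by
    rw [neg_div, neg_div, neg_le_neg_iff]
    exact div_le_div_of_nonneg_left hμ (by linarith) (by linarith)

theorem intervalIntegrable_pow_mul_exp_neg_div_one_sub (hμ : 0 ≤ μ) (n : ℕ) :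
    IntervalIntegrable (fun t : ℝ => t ^ n * exp (-μ / (1 - t))) volume 0 1 := by
  refine (_root_.intervalIntegrable_const (c := (1 : ℝ))).mono_fun'
    (by fun_prop : Measurable fun t : ℝ => t ^ n * exp (-μ / (1 - t))).aestronglyMeasurable ?_
  filter_upwards [ae_restrict_mem measurableSet_uIoc] with t ht
  rw [Set.uIoc_of_le zero_le_one] at ht
  rw [norm_of_nonneg (mul_nonneg (pow_nonneg ht.1.le n) (exp_pos _).le)]
  exact mul_le_one₀ (pow_le_one₀ ht.1.le ht.2) (exp_pos _).le (exp_neg_div_one_sub_le_one hμ ht.2)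

theorem integral_pow_mul_exp_neg_div_one_sub_le_one (hμ : 0 ≤ μ) (n : ℕ) :
    ∫ t in (0 : ℝ)..1, t ^ n * exp (-μ / (1 - t)) ≤ 1 := by
  calc ∫ t in (0 : ℝ)..1, t ^ n * exp (-μ / (1 - t))
      ≤ ∫ _ in (0 : ℝ)..1, (1 : ℝ) := by
        refine integral_mono_on zero_le_one
          (intervalIntegrable_pow_mul_exp_neg_div_one_sub hμ n) intervalIntegrable_const
          fun t ht => ?_
        exact mul_le_one₀ (pow_le_one₀ ht.1 ht.2) (exp_pos _).le
          (exp_neg_div_one_sub_le_one hμ ht.2)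
    _ = 1 := by simp

theorem mul_pow_mul_exp_le_integral_pow_mul_exp_neg_div_one_sub (hμ : 0 ≤ μ) {a b : ℝ}
    (ha : 0 ≤ a) (hab : a ≤ b) (hb : b < 1) (n : ℕ) :
    (b - a) * a ^ n * exp (-μ / (1 - b)) ≤ ∫ t in (0 : ℝ)..1, t ^ n * exp (-μ / (1 - t)) := by
  have hint := intervalIntegrable_pow_mul_exp_neg_div_one_sub hμ n
  calc (b - a) * a ^ n * exp (-μ / (1 - b)) = ∫ _ in a..b, a ^ n * exp (-μ / (1 - b)) := by
        rw [intervalIntegral.integral_const, smul_eq_mul, mul_assoc]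
    _ ≤ ∫ t in a..b, t ^ n * exp (-μ / (1 - t)) := by
        refine integral_mono_on hab intervalIntegrable_const
          (hint.mono_set ?_) fun t ht => ?_
        · rw [Set.uIcc_of_le hab, Set.uIcc_of_le zero_le_one]
          exact Set.Icc_subset_Icc ha hb.le
        · exact mul_le_mul (pow_le_pow_left₀ ha ht.1 n)
            (exp_neg_div_one_sub_le_of_le hμ ht.2 hb) (exp_pos _).le (by positivity [ha.trans ht.1])
    _ ≤ ∫ t in (0 : ℝ)..1, t ^ n * exp (-μ / (1 - t)) := by
        refine integral_mono_interval ha hab hb.le ?_ hint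
        filter_upwards [ae_restrict_mem measurableSet_Ioc] with t ht
        exact mul_nonneg (pow_nonneg ht.1.le n) (exp_pos _).le

theorem eventually_exp_neg_mul_le_integral_pow_mul_exp_neg_div_one_sub (hμ : 0 ≤ μ) {c : ℝ}
    (hc : 0 < c) :
    ∀ᶠ n : ℕ in atTop, exp (-(c * n)) ≤ ∫ t in (0 : ℝ)..1, t ^ n * exp (-μ / (1 - t)) := by
  set a := exp (-(c / 2))
  have ha1 : a < 1 := exp_lt_one_iff.2 (by linarith)
  set b := (a + 1) / 2 with hb
  have hab : a < b := by linarith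
  have hb1 : b < 1 := by linarith
  have hD : 0 < (b - a) * exp (-μ / (1 - b)) := mul_pos (by linarith) (exp_pos _)
  filter_upwards [(tendsto_order.1 (tendsto_pow_atTop_nhds_zero_of_lt_one (exp_pos _).le ha1)).2
    _ hD] with n hn
  calc exp (-(c * n)) = a ^ n * a ^ n := by
        rw [← exp_nat_mul, ← exp_add]; ring_nf
    _ ≤ (b - a) * exp (-μ / (1 - b)) * a ^ n := by gcongr
    _ = (b - a) * a ^ n * exp (-μ / (1 - b)) := by ring
    _ ≤ _ := mul_pow_mul_exp_le_integral_pow_mul_exp_neg_div_one_sub hμ (exp_pos _).le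
        hab.le hb1 n

end Moments

theorem u_c_subexponential (μ : ℝ) (hμ : 0 < μ) :
    Filter.Tendsto
      (fun k : ℕ =>
        Real.log (∫ t in (0:ℝ)..1, t ^ (k - 1) * Real.exp (-μ / (1 - t))) / (-(k : ℝ)))
      Filter.atTop (nhds 0) := by
  have h_ge (c : ℝ) (hc : 0 < c) : ∀ᶠ k : ℕ in atTop,
      exp (-(c * k)) ≤ ∫ t in (0 : ℝ)..1, t ^ (k - 1) * exp (-μ / (1 - t)) := by
    filter_upwards [(tendsto_sub_atTop_nat 1).eventually
      (eventually_exp_neg_mul_le_integral_pow_mul_exp_neg_div_one_sub hμ.le hc)] with k hk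
    refine le_trans (exp_le_exp.2 ?_) hk
    have : ((k - 1 : ℕ) : ℝ) ≤ k := by exact_mod_cast k.sub_le 1
    nlinarith
  have h := (tendsto_log_div_natCast_of_exp_neg_mul_le
    (Eventually.of_forall fun k => integral_pow_mul_exp_neg_div_one_sub_le_one hμ.le (k - 1))
    h_ge).neg
  simpa only [div_neg, neg_zero] using h
end

section
/- For any fixed μ > 0, u_c(k)·k^p → 0 as k → ∞ for every real p > 0, i.e., u_c decays faster than any power of k. -/
open Real Filter MeasureTheory

set_option maxHeartbeats 1000000 in
private lemma exp_neg_le_factorial_div_pow {y : ℝ} (hy : 0 < y) (m : ℕ) :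
    Real.exp (-y) ≤ m.factorial / y ^ m := by
  have h := Real.pow_div_factorial_le_exp y hy.le m
  have hfac : (0:ℝ) < m.factorial := by positivity
  rw [div_le_iff₀ hfac] at h
  have hpow : (0:ℝ) < y ^ m := by positivity
  rw [Real.exp_neg, le_div_iff₀ hpow, inv_mul_le_iff₀ (Real.exp_pos y)]
  exact h

set_option maxHeartbeats 1000000 in
theorem u_c_superpolynomial (μ : ℝ) (hμ : 0 < μ) (p : ℝ) (hp : 0 < p) :
    Filter.Tendsto
      (fun k : ℕ =>
        (∫ t in (0:ℝ)..1, t ^ (k - 1) * Real.exp (-μ / (1 - t))) * (k : ℝ) ^ p)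
      Filter.atTop (nhds 0) := by
  set m : ℕ := ⌈p⌉₊ + 1 with hm
  have hpm : p < (m : ℝ) := by
    have := Nat.le_ceil p
    push_cast [hm]
    linarith
  set C : ℝ := (m.factorial : ℝ) ^ 2 / μ ^ m with hC
  have hCpos : 0 < C := by positivity
  -- the dominating sequence
  have hg : Tendsto (fun k : ℕ => (C * 2 ^ p) * ((k : ℝ) - 1) ^ (p - (m : ℝ)))
      atTop (nhds 0) := by
    have h1 : Tendsto (fun k : ℕ => (k : ℝ) - 1) atTop atTop :=
      (tendsto_atTop_add_const_right _ (-1) tendsto_natCast_atTop_atTop).congr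
        (fun k => by ring)
    have h2 : Tendsto (fun x : ℝ => x ^ (p - (m : ℝ))) atTop (nhds 0) := by
      have := tendsto_rpow_neg_atTop (y := (m : ℝ) - p) (by linarith)
      simpa [neg_sub] using this
    simpa using ((h2.comp h1).const_mul (C * 2 ^ p))
  apply squeeze_zero' (g := fun k : ℕ => (C * 2 ^ p) * ((k : ℝ) - 1) ^ (p - (m : ℝ)))
  · filter_upwards [eventually_ge_atTop 1] with k hk
    have h1 : (0:ℝ) ≤ ∫ t in (0:ℝ)..1, t ^ (k - 1) * Real.exp (-μ / (1 - t)) := by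
      apply intervalIntegral.integral_nonneg (by norm_num)
      intro t ht
      have : 0 ≤ t := ht.1
      positivity
    have h2 : (0:ℝ) ≤ (k : ℝ) ^ p := Real.rpow_nonneg (Nat.cast_nonneg k) p
    exact mul_nonneg h1 h2
  · filter_upwards [eventually_ge_atTop 2] with k hk
    have hk1 : (1:ℝ) < (k : ℝ) := by exact_mod_cast Nat.lt_of_lt_of_le one_lt_two hk
    have hk1' : (0:ℝ) < (k : ℝ) - 1 := by linarith
    have hk2 : (2:ℝ) ≤ (k:ℝ) := by exact_mod_cast hk
    have hcast : ((k - 1 : ℕ) : ℝ) = (k : ℝ) - 1 := by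
      have : 1 ≤ k := le_trans one_le_two hk
      push_cast [Nat.cast_sub this]
      ring
    -- pointwise a.e. bound on the integrand
    have hbound : ∀ᵐ x : ℝ, x ∈ Set.uIoc (0:ℝ) 1 →
        ‖x ^ (k - 1) * Real.exp (-μ / (1 - x))‖ ≤ C / ((k : ℝ) - 1) ^ m := by
      have hae : ∀ᵐ x : ℝ, x ≠ 1 := by
        rw [MeasureTheory.ae_iff]
        simpa using MeasureTheory.measure_singleton (1 : ℝ)
      filter_upwards [hae] with x hx1 hx
      rw [Set.uIoc_of_le (by norm_num : (0:ℝ) ≤ 1)] at hx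
      have hx0 : 0 < x := hx.1
      have hxlt : x < 1 := lt_of_le_of_ne hx.2 hx1
      set s : ℝ := 1 - x with hs
      have hs0 : 0 < s := by simp [hs]; linarith
      have hxnn : (0:ℝ) ≤ x := hx0.le
      -- step 1 : exp (-μ/s) ≤ m! * s^m / μ^m
      have step1 : Real.exp (-μ / s) ≤ (m.factorial : ℝ) * s ^ m / μ ^ m := by
        have hms : 0 < μ / s := div_pos hμ hs0
        have := exp_neg_le_factorial_div_pow hms m
        rw [neg_div]
        refine this.trans (le_of_eq ?_)
        rw [div_pow, div_div_eq_mul_div]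
      -- step 2 : x^(k-1) ≤ exp (-(k-1) * s)
      have step2 : x ^ (k - 1) ≤ Real.exp (-(((k:ℝ) - 1) * s)) := by
        have hxe : x ≤ Real.exp (-s) := by
          have := Real.add_one_le_exp (-s)
          linarith
        calc x ^ (k - 1) ≤ Real.exp (-s) ^ (k - 1) :=
              pow_le_pow_left₀ hxnn hxe _
          _ = Real.exp (((k - 1 : ℕ) : ℝ) * (-s)) := by
              rw [← Real.exp_nat_mul]
          _ = Real.exp (-(((k:ℝ) - 1) * s)) := by rw [hcast]; ring_nf
      -- step 3 : exp(-(k-1)s) * s^m ≤ m! / (k-1)^m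
      have step3 : Real.exp (-(((k:ℝ) - 1) * s)) * s ^ m
          ≤ (m.factorial : ℝ) / ((k : ℝ) - 1) ^ m := by
        have hy : 0 < ((k:ℝ) - 1) * s := mul_pos hk1' hs0
        have := exp_neg_le_factorial_div_pow hy m
        calc Real.exp (-(((k:ℝ) - 1) * s)) * s ^ m
            ≤ (m.factorial : ℝ) / (((k:ℝ) - 1) * s) ^ m * s ^ m := by
              apply mul_le_mul_of_nonneg_right this (by positivity)
          _ = (m.factorial : ℝ) / ((k : ℝ) - 1) ^ m := by
              rw [mul_pow]
              field_simp
      -- combine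
      have hnn : 0 ≤ x ^ (k - 1) * Real.exp (-μ / (1 - x)) := by positivity
      rw [Real.norm_eq_abs, abs_of_nonneg hnn]
      calc x ^ (k - 1) * Real.exp (-μ / (1 - x))
          ≤ Real.exp (-(((k:ℝ) - 1) * s)) * ((m.factorial : ℝ) * s ^ m / μ ^ m) := by
            apply mul_le_mul step2 step1 (Real.exp_pos _).le (Real.exp_pos _).le
        _ = (Real.exp (-(((k:ℝ) - 1) * s)) * s ^ m) * ((m.factorial : ℝ) / μ ^ m) := by
            ring
        _ ≤ ((m.factorial : ℝ) / ((k : ℝ) - 1) ^ m) * ((m.factorial : ℝ) / μ ^ m) := by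
            apply mul_le_mul_of_nonneg_right step3 (by positivity)
        _ = C / ((k : ℝ) - 1) ^ m := by
            rw [hC]
            field_simp
    have hint : ‖∫ t in (0:ℝ)..1, t ^ (k - 1) * Real.exp (-μ / (1 - t))‖
        ≤ C / ((k : ℝ) - 1) ^ m := by
      have := intervalIntegral.norm_integral_le_of_norm_le_const_ae hbound
      simpa using this
    have h1 : (∫ t in (0:ℝ)..1, t ^ (k - 1) * Real.exp (-μ / (1 - t)))
        ≤ C / ((k : ℝ) - 1) ^ m := (le_abs_self _).trans (by rwa [← Real.norm_eq_abs])
    have hkp : (k : ℝ) ^ p ≤ 2 ^ p * ((k : ℝ) - 1) ^ p := by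
      rw [← Real.mul_rpow (by norm_num) hk1'.le]
      apply Real.rpow_le_rpow (Nat.cast_nonneg k) (by linarith) hp.le
    have hintnn : (0:ℝ) ≤ ∫ t in (0:ℝ)..1, t ^ (k - 1) * Real.exp (-μ / (1 - t)) := by
      apply intervalIntegral.integral_nonneg (by norm_num)
      intro t ht
      have : 0 ≤ t := ht.1
      positivity
    calc (∫ t in (0:ℝ)..1, t ^ (k - 1) * Real.exp (-μ / (1 - t))) * (k : ℝ) ^ p
        ≤ (C / ((k : ℝ) - 1) ^ m) * (2 ^ p * ((k : ℝ) - 1) ^ p) := by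
          apply mul_le_mul h1 hkp (Real.rpow_nonneg (Nat.cast_nonneg k) p) (by positivity)
      _ = (C * 2 ^ p) * (((k : ℝ) - 1) ^ p / ((k : ℝ) - 1) ^ (m:ℝ)) := by
          rw [← Real.rpow_natCast (((k : ℝ) - 1)) m]
          ring
      _ = (C * 2 ^ p) * ((k : ℝ) - 1) ^ (p - (m : ℝ)) := by
          rw [← Real.rpow_sub hk1']
  exact hg
end

section
/- Let β > 0 and 0 ≤ ζ < 1. Then there exist positive constants c₁ ≤ c₂ such that for all integers k ≥ 1, c₁ k^{-(1+β)} ≤ ∫₀¹ t^{k-1} ((1-t)/(1-ζt))^{β} dt ≤ c₂ k^{-(1+β)}. -/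
/-!
After the substitution `s = 1 - t` the integrand is `(1 - s) ^ (k - 1)` times a weight that is
comparable to `s ^ β` on `[0, 1]` up to the factor `(1 - ζ) ^ (-β)`, so it suffices to bound
`B k = ∫₀¹ (1 - s) ^ (k - 1) s ^ β ds`. From above, `(1 - s) ^ (k - 1) ≤ e · e ^ (-k s)` and the
resulting integral over `[0, ∞)` is `Γ(β + 1) k ^ (-(1 + β))`. From below, Bernoulli's
inequality gives `(1 - s) ^ (k - 1) ≥ 1 / 2` for `s ≤ 1 / (2k)`, and `s ^ β ≥ (4k) ^ (-β)` on
`[1 / (4k), 1 / (2k)]`.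
-/

open Real MeasureTheory Set intervalIntegral

lemma integral_rpow_mul_exp_neg_mul_le {β r : ℝ} (hβ : -1 < β) (hr : 0 < r) :
    ∫ s in (0 : ℝ)..1, s ^ β * exp (-(r * s)) ≤ Gamma (β + 1) * r ^ (-(1 + β)) := by
  have hint : IntegrableOn (fun s : ℝ => s ^ β * exp (-(r * s))) (Ioi 0) := by
    simpa only [rpow_one, neg_mul] using
      integrableOn_rpow_mul_exp_neg_mul_rpow (p := 1) hβ one_pos hr
  have hnonneg : 0 ≤ᵐ[volume.restrict (Ioi 0)] fun s : ℝ => s ^ β * exp (-(r * s)) :=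
    (ae_restrict_iff' measurableSet_Ioi).2 <| .of_forall fun s hs =>
      mul_nonneg (rpow_nonneg (le_of_lt hs) _) (exp_pos _).le
  calc ∫ s in (0 : ℝ)..1, s ^ β * exp (-(r * s))
      = ∫ s in Ioc 0 1, s ^ β * exp (-(r * s)) := integral_of_le zero_le_one
    _ ≤ ∫ s in Ioi 0, s ^ β * exp (-(r * s)) :=
      setIntegral_mono_set hint hnonneg Ioc_subset_Ioi_self.eventuallyLE
    _ = (1 / r) ^ (β + 1) * Gamma (β + 1) := by
      simpa only [add_sub_cancel_right] using
        integral_rpow_mul_exp_neg_mul_Ioi (by linarith : 0 < β + 1) hr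
    _ = Gamma (β + 1) * r ^ (-(1 + β)) := by
      rw [one_div, inv_rpow hr.le, ← rpow_neg hr.le, add_comm β 1, mul_comm]

lemma one_sub_pow_pred_le_exp {k : ℕ} (hk : 1 ≤ k) {s : ℝ} (hs1 : s ≤ 1) :
    (1 - s) ^ (k - 1) ≤ exp 1 * exp (-(k * s)) := by
  calc (1 - s) ^ (k - 1) ≤ exp (-s) ^ (k - 1) :=
        pow_le_pow_left₀ (by linarith) (one_sub_le_exp_neg s) _
    _ = exp s * exp (-(k * s)) := by
      rw [← exp_nat_mul, ← exp_add, Nat.cast_sub hk, Nat.cast_one]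
      ring_nf
    _ ≤ exp 1 * exp (-(k * s)) := by gcongr

lemma intervalIntegrable_one_sub_pow_mul_rpow {β : ℝ} (hβ : 0 ≤ β) (n : ℕ) :
    IntervalIntegrable (fun s : ℝ => (1 - s) ^ n * s ^ β) volume 0 1 :=
  ((continuous_const.sub continuous_id).pow n |>.mul
    (continuous_rpow_const hβ)).intervalIntegrable 0 1

lemma integral_one_sub_pow_pred_mul_rpow_le {β : ℝ} (hβ : 0 ≤ β) {k : ℕ} (hk : 1 ≤ k) :
    ∫ s in (0 : ℝ)..1, (1 - s) ^ (k - 1) * s ^ β ≤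
      exp 1 * Gamma (β + 1) * (k : ℝ) ^ (-(1 + β)) := by
  have hexp : IntervalIntegrable (fun s : ℝ => exp 1 * (s ^ β * exp (-(k * s)))) volume 0 1 :=
    ((continuous_rpow_const hβ).mul (by fun_prop)).intervalIntegrable 0 1 |>.const_mul _
  calc ∫ s in (0 : ℝ)..1, (1 - s) ^ (k - 1) * s ^ β
      ≤ ∫ s in (0 : ℝ)..1, exp 1 * (s ^ β * exp (-(k * s))) := by
        refine integral_mono_on zero_le_one
          (intervalIntegrable_one_sub_pow_mul_rpow hβ _) hexp fun s hs => ?_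
        calc (1 - s) ^ (k - 1) * s ^ β ≤ exp 1 * exp (-(k * s)) * s ^ β := by
              gcongr
              · exact rpow_nonneg hs.1 _
              · exact one_sub_pow_pred_le_exp hk hs.2
          _ = exp 1 * (s ^ β * exp (-(k * s))) := by ring
    _ = exp 1 * ∫ s in (0 : ℝ)..1, s ^ β * exp (-(k * s)) := integral_const_mul _ _
    _ ≤ exp 1 * (Gamma (β + 1) * (k : ℝ) ^ (-(1 + β))) := by
        gcongr
        exact integral_rpow_mul_exp_neg_mul_le (by linarith) (by exact_mod_cast hk)
    _ = exp 1 * Gamma (β + 1) * (k : ℝ) ^ (-(1 + β)) := (mul_assoc _ _ _).symm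

lemma le_integral_one_sub_pow_pred_mul_rpow {β : ℝ} (hβ : 0 ≤ β) {k : ℕ} (hk : 1 ≤ k) :
    4 ^ (-(1 + β)) / 2 * (k : ℝ) ^ (-(1 + β)) ≤
      ∫ s in (0 : ℝ)..1, (1 - s) ^ (k - 1) * s ^ β := by
  have hk0 : (0 : ℝ) < k := by exact_mod_cast hk
  set a : ℝ := (4 * k)⁻¹
  have ha : 0 < a := by positivity
  have h2a : 2 * a ≤ 1 := by
    have : (1 : ℝ) ≤ k := by exact_mod_cast hk
    simp only [a]; rw [← div_eq_mul_inv, div_le_one (by positivity)]; linarith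
  have hbound : ∀ s ∈ Icc a (2 * a), 2⁻¹ * a ^ β ≤ (1 - s) ^ (k - 1) * s ^ β := by
    intro s hs
    -- Bernoulli: `(1 - s) ^ (k - 1) ≥ 1 - (k - 1) s ≥ 1 - 2 k a = 1 / 2`.
    have hbern : 2⁻¹ ≤ (1 - s) ^ (k - 1) := by
      have := one_add_mul_le_pow (a := -s) (by linarith [hs.2]) (k - 1)
      rw [← sub_eq_add_neg, Nat.cast_sub hk, Nat.cast_one] at this
      have hka : (k : ℝ) * a = 4⁻¹ := by simp only [a]; field_simp
      nlinarith [mul_le_mul_of_nonneg_left hs.2 hk0.le, hs.1]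
    exact mul_le_mul hbern (rpow_le_rpow ha.le hs.1 hβ) (by positivity)
      (pow_nonneg (by linarith [hs.2]) _)
  calc 4 ^ (-(1 + β)) / 2 * (k : ℝ) ^ (-(1 + β)) = (2 * a - a) * (2⁻¹ * a ^ β) := by
        have e : (4 : ℝ) ^ (-(1 + β)) * (k : ℝ) ^ (-(1 + β)) = a * a ^ β := by
          rw [← mul_rpow (by norm_num) hk0.le, rpow_neg (by positivity), ← inv_rpow (by positivity),
            rpow_add ha, rpow_one]
        linear_combination e / 2
    _ = ∫ s in a..(2 * a), 2⁻¹ * a ^ β := (intervalIntegral.integral_const _).symm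
    _ ≤ ∫ s in a..(2 * a), (1 - s) ^ (k - 1) * s ^ β :=
        integral_mono_on (by linarith) intervalIntegrable_const
          ((intervalIntegrable_one_sub_pow_mul_rpow hβ _).mono_set (by
            rw [uIcc_of_le (by linarith), uIcc_of_le zero_le_one]
            exact Icc_subset_Icc ha.le h2a)) hbound
    _ ≤ ∫ s in (0 : ℝ)..1, (1 - s) ^ (k - 1) * s ^ β := by
        refine integral_mono_interval ha.le (by linarith) h2a ?_
          (intervalIntegrable_one_sub_pow_mul_rpow hβ _)
        exact (ae_restrict_iff' measurableSet_Ioc).2 <| .of_forall fun s hs =>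
          mul_nonneg (pow_nonneg (by linarith [hs.2]) _) (rpow_nonneg hs.1.le _)

lemma integral_pow_mul_one_sub_rpow (β : ℝ) (n : ℕ) :
    ∫ t in (0 : ℝ)..1, t ^ n * (1 - t) ^ β = ∫ s in (0 : ℝ)..1, (1 - s) ^ n * s ^ β := by
  simpa only [sub_sub_cancel, sub_self, sub_zero] using
    integral_comp_sub_left (a := 0) (b := 1) (fun s : ℝ => (1 - s) ^ n * s ^ β) 1

lemma rpow_one_sub_le_rpow_div_one_sub_mul {β ζ t : ℝ} (hβ : 0 ≤ β) (hζ0 : 0 ≤ ζ) (hζ1 : ζ < 1)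
    (ht0 : 0 ≤ t) (ht1 : t ≤ 1) : (1 - t) ^ β ≤ ((1 - t) / (1 - ζ * t)) ^ β := by
  have hζt : ζ * t ≤ ζ := mul_le_of_le_one_right hζ0 ht1
  have hζt0 : 0 ≤ ζ * t := mul_nonneg hζ0 ht0
  exact rpow_le_rpow (by linarith) (le_div_self (by linarith) (by linarith) (by linarith)) hβ

lemma rpow_div_one_sub_mul_le {β ζ t : ℝ} (hβ : 0 ≤ β) (hζ0 : 0 ≤ ζ) (hζ1 : ζ < 1)
    (ht1 : t ≤ 1) : ((1 - t) / (1 - ζ * t)) ^ β ≤ (1 - ζ) ^ (-β) * (1 - t) ^ β := by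
  have hζt : ζ * t ≤ ζ := mul_le_of_le_one_right hζ0 ht1
  calc ((1 - t) / (1 - ζ * t)) ^ β ≤ ((1 - t) / (1 - ζ)) ^ β :=
        rpow_le_rpow (div_nonneg (by linarith) (by linarith))
          (div_le_div_of_nonneg_left (by linarith) (by linarith) (by linarith)) hβ
    _ = (1 - ζ) ^ (-β) * (1 - t) ^ β := by
        rw [div_rpow (by linarith) (by linarith), rpow_neg (by linarith), div_eq_inv_mul]

lemma intervalIntegrable_pow_mul_rpow_div_one_sub_mul {β ζ : ℝ} (hβ : 0 ≤ β) (hζ0 : 0 ≤ ζ)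
    (hζ1 : ζ < 1) (n : ℕ) :
    IntervalIntegrable (fun t : ℝ => t ^ n * ((1 - t) / (1 - ζ * t)) ^ β) volume 0 1 := by
  have hden : ∀ t ∈ Icc (0 : ℝ) 1, 1 - ζ * t ≠ 0 := fun t ht => by
    nlinarith [mul_le_of_le_one_right hζ0 ht.2]
  refine ContinuousOn.intervalIntegrable ?_
  rw [uIcc_of_le zero_le_one]
  exact (continuousOn_pow _).mul <| ContinuousOn.rpow_const (by fun_prop (disch := exact hden))
    fun _ _ => Or.inr hβ

lemma intervalIntegrable_pow_mul_one_sub_rpow {β : ℝ} (hβ : 0 ≤ β) (n : ℕ) :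
    IntervalIntegrable (fun t : ℝ => t ^ n * (1 - t) ^ β) volume 0 1 :=
  Continuous.intervalIntegrable (by fun_prop (disch := exact hβ)) 0 1

lemma integral_pow_mul_one_sub_rpow_le {β ζ : ℝ} (hβ : 0 ≤ β) (hζ0 : 0 ≤ ζ) (hζ1 : ζ < 1)
    (n : ℕ) :
    ∫ t in (0 : ℝ)..1, t ^ n * (1 - t) ^ β ≤
      ∫ t in (0 : ℝ)..1, t ^ n * ((1 - t) / (1 - ζ * t)) ^ β :=
  integral_mono_on zero_le_one (intervalIntegrable_pow_mul_one_sub_rpow hβ n)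
    (intervalIntegrable_pow_mul_rpow_div_one_sub_mul hβ hζ0 hζ1 n) fun _ ht =>
      mul_le_mul_of_nonneg_left (rpow_one_sub_le_rpow_div_one_sub_mul hβ hζ0 hζ1 ht.1 ht.2)
        (pow_nonneg ht.1 _)

lemma integral_pow_mul_rpow_div_one_sub_mul_le {β ζ : ℝ} (hβ : 0 ≤ β) (hζ0 : 0 ≤ ζ)
    (hζ1 : ζ < 1) (n : ℕ) :
    ∫ t in (0 : ℝ)..1, t ^ n * ((1 - t) / (1 - ζ * t)) ^ β ≤
      (1 - ζ) ^ (-β) * ∫ t in (0 : ℝ)..1, t ^ n * (1 - t) ^ β := by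
  rw [← intervalIntegral.integral_const_mul]
  refine integral_mono_on zero_le_one (intervalIntegrable_pow_mul_rpow_div_one_sub_mul hβ hζ0 hζ1 n)
    ((intervalIntegrable_pow_mul_one_sub_rpow hβ n).const_mul _) fun t ht => ?_
  rw [mul_left_comm]
  exact mul_le_mul_of_nonneg_left (rpow_div_one_sub_mul_le hβ hζ0 hζ1 ht.2) (pow_nonneg ht.1 _)

theorem u_one_order (β ζ : ℝ) (hβ : 0 < β) (hζ0 : 0 ≤ ζ) (hζ1 : ζ < 1) :
    ∃ c₁ c₂ : ℝ, 0 < c₁ ∧ c₁ ≤ c₂ ∧ ∀ k : ℕ, 1 ≤ k →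
      c₁ * (k : ℝ) ^ (-(1 + β)) ≤
        (∫ t in (0:ℝ)..1, t ^ (k - 1) * ((1 - t) / (1 - ζ * t)) ^ β) ∧
      (∫ t in (0:ℝ)..1, t ^ (k - 1) * ((1 - t) / (1 - ζ * t)) ^ β) ≤
        c₂ * (k : ℝ) ^ (-(1 + β)) := by
  set c₁ : ℝ := 4 ^ (-(1 + β)) / 2
  set c₂ : ℝ := (1 - ζ) ^ (-β) * (exp 1 * Gamma (β + 1))
  refine ⟨c₁, max c₁ c₂, by positivity, le_max_left _ _, fun k hk => ⟨?_, ?_⟩⟩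
  · calc c₁ * (k : ℝ) ^ (-(1 + β)) ≤ ∫ s in (0 : ℝ)..1, (1 - s) ^ (k - 1) * s ^ β :=
          le_integral_one_sub_pow_pred_mul_rpow hβ.le hk
      _ = ∫ t in (0 : ℝ)..1, t ^ (k - 1) * (1 - t) ^ β :=
          (integral_pow_mul_one_sub_rpow β (k - 1)).symm
      _ ≤ _ := integral_pow_mul_one_sub_rpow_le hβ.le hζ0 hζ1 (k - 1)
  · calc _ ≤ (1 - ζ) ^ (-β) * ∫ t in (0 : ℝ)..1, t ^ (k - 1) * (1 - t) ^ β :=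
          integral_pow_mul_rpow_div_one_sub_mul_le hβ.le hζ0 hζ1 (k - 1)
      _ ≤ c₂ * (k : ℝ) ^ (-(1 + β)) := by
          rw [integral_pow_mul_one_sub_rpow, mul_assoc]
          gcongr
          exact integral_one_sub_pow_pred_mul_rpow_le hβ.le hk
      _ ≤ max c₁ c₂ * (k : ℝ) ^ (-(1 + β)) := by gcongr; exact le_max_right _ _
end
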